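/- Let σ be an alternating smoothing with k open strands (rotation number of open strand (a,b) with relabeled in-point 0 and out-point i being (i-k)/(2k)) and loops counted as ±1. If two open strands (i₁,j₁) and (i₂,j₂) bound a common positive (counterclockwise-oriented) region and are replaced by strands (i₁,j₂) and (i₂,j₁), yielding a smoothing τ, then R(τ) = R(σ) + 1, where R denotes the sum of rotation numbers of all strands. -/
import Mathlib


/-- A strand of an alternating oriented smoothing with `2k` boundary points: either a
loop (positive = counterclockwise, negative = clockwise) or an open oriented arc with
in-point `i` and out-point `o` among the `2k` boundary points. -/
inductive Strand (k : ℕ) where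
  | loop (pos : Bool)
  | arc (i o : Fin (2 * k))

/-- Rotation number of a strand: `±1` for loops; for an open strand, relabel so the
in-point is `0` (the out-point becomes `(o + 2k - i) mod 2k`), giving `(i' - k)/(2k)`. -/
def strandRot {k : ℕ} : Strand k → ℚ
  | .loop b => if b then 1 else -1
  | .arc i o => (((((o : ℕ) + 2 * k - (i : ℕ)) % (2 * k) : ℕ) : ℚ) - k) / (2 * k)

/-- The rotation number of a smoothing (a multiset of strands) is the sum of the
rotation numbers of its strands. -/
def rot {k : ℕ} (σ : Multiset (Strand k)) : ℚ := (σ.map strandRot).sum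

lemma key_cast (n x y : ℕ) (hx : x < n) :
    (((y + n - x) % n : ℕ) : ℤ) = ((y : ℤ) - x) % n := by
  have h1 : ((y + n - x : ℕ) : ℤ) = (y : ℤ) - x + n := by omega
  rw [Int.natCast_mod, h1]; simp [Int.add_emod]

lemma key_int (n a b c x₁ x₂ y₁ y₂ : ℤ) (hn : 0 < n)
    (ha : a = (y₁ - x₁) % n) (hb : b = (x₂ - x₁) % n) (hc : c = (y₂ - x₁) % n)
    (hab : a < b) (hbc : b < c) :
    c + (y₁ - x₂) % n = a + (y₂ - x₂) % n + n := by
  have ha0 : 0 ≤ a := ha ▸ Int.emod_nonneg _ hn.ne'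
  have hb0 : 0 ≤ b := hb ▸ Int.emod_nonneg _ hn.ne'
  have hcn : c < n := hc ▸ Int.emod_lt_of_pos _ hn
  have hd2 : (y₂ - x₂) % n = c - b := by
    have h : (y₂ - x₂) % n = ((y₂ - x₁) % n - (x₂ - x₁) % n) % n := by
      rw [← Int.sub_emod]; ring_nf
    rw [h, ← hb, ← hc, Int.emod_eq_of_lt (by omega) (by omega)]
  have hd1 : (y₁ - x₂) % n = a - b + n := by
    have h : (y₁ - x₂) % n = ((y₁ - x₁) % n - (x₂ - x₁) % n) % n := by
      rw [← Int.sub_emod]; ring_nf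
    rw [h, ← hb, ← ha]
    have h2 : (a - b) % n = (a - b + n) % n := by simp [Int.add_emod]
    rw [h2, Int.emod_eq_of_lt (by omega) (by omega)]
  omega

/-- If two open strands `(i₁,j₁)` and `(i₂,j₂)` of a smoothing `σ` bound a common
positive (counterclockwise) region — encoded combinatorially: measuring positions
counterclockwise from `i₁`, the in-point `i₂` lies strictly between the out-point `j₁`
and the out-point `j₂` — and they are replaced by the strands `(i₁,j₂)` and `(i₂,j₁)`,
yielding `τ`, then `R(τ) = R(σ) + 1`. -/
theorem rot_reconnect_positive (k : ℕ) (hk : 0 < k) (σ₀ : Multiset (Strand k))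
    (i₁ j₁ i₂ j₂ : Fin (2 * k))
    (hpos :
      ((j₁ : ℕ) + 2 * k - (i₁ : ℕ)) % (2 * k) < ((i₂ : ℕ) + 2 * k - (i₁ : ℕ)) % (2 * k) ∧
      ((i₂ : ℕ) + 2 * k - (i₁ : ℕ)) % (2 * k) < ((j₂ : ℕ) + 2 * k - (i₁ : ℕ)) % (2 * k)) :
    rot (σ₀ + {Strand.arc i₁ j₂, Strand.arc i₂ j₁})
      = rot (σ₀ + {Strand.arc i₁ j₁, Strand.arc i₂ j₂}) + 1 := by
  have hn : 0 < 2 * k := by omega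
  have hsum : ∀ x y : Strand k, rot (σ₀ + {x, y}) = rot σ₀ + strandRot x + strandRot y := by
    intro x y
    simp [rot, Multiset.insert_eq_cons]
    ring
  rw [hsum, hsum]
  have key := key_int ((2 * k : ℕ) : ℤ)
      ((((j₁:ℕ) + 2 * k - i₁) % (2 * k) : ℕ) : ℤ)
      ((((i₂:ℕ) + 2 * k - i₁) % (2 * k) : ℕ) : ℤ)
      ((((j₂:ℕ) + 2 * k - i₁) % (2 * k) : ℕ) : ℤ)
      (i₁ : ℕ) (i₂ : ℕ) (j₁ : ℕ) (j₂ : ℕ) (by exact_mod_cast hn)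
      (key_cast (2 * k) i₁ j₁ i₁.isLt) (key_cast (2 * k) i₁ i₂ i₁.isLt)
      (key_cast (2 * k) i₁ j₂ i₁.isLt) (by exact_mod_cast hpos.1) (by exact_mod_cast hpos.2)
  rw [← key_cast (2 * k) i₂ j₁ i₂.isLt, ← key_cast (2 * k) i₂ j₂ i₂.isLt] at key
  have keyq : ((((j₂:ℕ) + 2 * k - i₁) % (2 * k) : ℕ) : ℚ)
        + ((((j₁:ℕ) + 2 * k - i₂) % (2 * k) : ℕ) : ℚ)
      = ((((j₁:ℕ) + 2 * k - i₁) % (2 * k) : ℕ) : ℚ)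
        + ((((j₂:ℕ) + 2 * k - i₂) % (2 * k) : ℕ) : ℚ) + 2 * k := by
    exact_mod_cast key
  simp only [strandRot]
  have hk0 : (2 * (k : ℚ)) ≠ 0 := by positivity
  field_simp
  linarith [keyq]
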